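/- Supermartingale induced by an RASM: In the setting of the stochastic dynamical system with trajectory process (x_t)_{t∈ℕ} started at x₀ ∈ 𝒳₀, let V : 𝒳 → ℝ be an RASM with respect to 𝒳_t, 𝒳_u and p ∈ [0,1), and write c = 1/(1−p). Let (𝓕_t)_{t∈ℕ} be the filtration where 𝓕_t is generated by (x_0, x_1, …, x_t). Define the process (Y_t)_{t∈ℕ} by: Y_t = V(x_t) if x_i ∉ 𝒳_t and V(x_i) < c for all i ≤ t; Y_t = 0 if there exists i ≤ t with x_i ∈ 𝒳_t and V(x_j) < c for all j ≤ i; and Y_t = c otherwise. Then (Y_t)_{t∈ℕ} is a nonnegative supermartingale with respect to (𝓕_t): each Y_t is 𝓕_t-measurable, integrable, Y_t ≥ 0, and 𝔼[Y_{t+1} ∣ 𝓕_t] ≤ Y_t almost surely. -/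

import Mathlib

/-!
Until it stops, by entering `Xt` or by `V` reaching `c`, the process `Y` follows `V` along the
trajectory; afterwards it is frozen at `0` or at `c`. The noise lies almost surely in the support
of `d`, so the trajectory stays in `𝒳` and `0 ≤ Y ≤ c`. Off the event that `Y` is still running
at time `t`, `Y (t+1) = Y t`; on it, `Y (t+1)` is at most the truncation
`max 0 (min (V x_{t+1}) c)`, which is bounded. As `x_{t+1} = f x_t (π x_t) ω_t` with `ω_t`
independent of `ℱ t`, the conditional expectation of the truncation is its `d`-average at `x_t`,
which is at most `∫ V (f x_t (π x_t) w) dd(w) ≤ V x_t - ε`.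
-/

open MeasureTheory ProbabilityTheory
open scoped Classical

/-- The (topological) support of a measure: the set of points all of whose open
neighbourhoods have positive measure. -/
def measureSupport {E : Type*} [TopologicalSpace E] [MeasurableSpace E]
    (d : Measure E) : Set E :=
  {w | ∀ U : Set E, IsOpen U → w ∈ U → 0 < d U}

theorem measureSupport_eq_support {E : Type*} [TopologicalSpace E] [MeasurableSpace E]
    (d : Measure E) : measureSupport d = d.support := by
  rw [Measure.support_eq_forall_isOpen]
  ext w
  exact forall_congr' fun U => ⟨fun h hw hU => h hU hw, fun h hU hw => h hw hU⟩

theorem ae_mem_measureSupport {E : Type*} [TopologicalSpace E] [MeasurableSpace E]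
    [HereditarilyLindelofSpace E] (d : Measure E) : ∀ᵐ w ∂d, w ∈ measureSupport d := by
  rw [measureSupport_eq_support]
  exact Measure.support_mem_ae

theorem Measurable.forall_le {Ω : Type*} {m : MeasurableSpace Ω} {p : ℕ → Ω → Prop} {t : ℕ}
    (hp : ∀ i ≤ t, Measurable[m] (p i)) : Measurable[m] fun ϖ => ∀ i ≤ t, p i ϖ :=
  Measurable.forall fun i => by
    by_cases hi : i ≤ t
    · simpa [hi] using hp i hi
    · simp [hi]

theorem Measurable.exists_le {Ω : Type*} {m : MeasurableSpace Ω} {p : ℕ → Ω → Prop} {t : ℕ}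
    (hp : ∀ i ≤ t, Measurable[m] (p i)) : Measurable[m] fun ϖ => ∃ i ≤ t, p i ϖ :=
  Measurable.exists fun i => by
    by_cases hi : i ≤ t
    · simpa [hi] using hp i hi
    · simp [hi]

section Freezing

variable {Ω α β : Type*} {m mΩ : MeasurableSpace Ω} [MeasurableSpace α] [mβ : MeasurableSpace β]
  {μ : Measure Ω} {W : Ω → β} {g : α × β → ℝ} {C : ℝ}

theorem integral_comp_prod_eq_integral_integral_of_indepFun [IsFiniteMeasure μ] {Z : Ω → α}
    (hZ : Measurable Z) (hW : Measurable W) (hind : IndepFun Z W μ)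
    (hg : Measurable g) (hgC : ∀ z, ‖g z‖ ≤ C) :
    ∫ ϖ, g (Z ϖ, W ϖ) ∂μ = ∫ ϖ, ∫ w, g (Z ϖ, w) ∂(μ.map W) ∂μ := by
  have hmap : μ.map (fun ϖ => (Z ϖ, W ϖ)) = (μ.map Z).prod (μ.map W) :=
    (indepFun_iff_map_prod_eq_prod_map_map hZ.aemeasurable hW.aemeasurable).mp hind
  have hint : Integrable g ((μ.map Z).prod (μ.map W)) :=
    .of_bound hg.aestronglyMeasurable C (.of_forall hgC)
  calc ∫ ϖ, g (Z ϖ, W ϖ) ∂μ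
      = ∫ z, g z ∂((μ.map Z).prod (μ.map W)) := by
        rw [← hmap, integral_map (hZ.prodMk hW).aemeasurable hg.aestronglyMeasurable]
    _ = ∫ z, ∫ w, g (z, w) ∂(μ.map W) ∂(μ.map Z) := integral_prod g hint
    _ = ∫ ϖ, ∫ w, g (Z ϖ, w) ∂(μ.map W) ∂μ :=
        integral_map hZ.aemeasurable hg.stronglyMeasurable.integral_prod_right'.aestronglyMeasurable

theorem condExp_comp_prod_ae_eq_integral_of_indep [IsProbabilityMeasure μ] (hm : m ≤ mΩ)
    {X : Ω → α} (hX : Measurable[m] X) (hW : Measurable W)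
    (hind : Indep m (mβ.comap W) μ)
    (hg : Measurable g) (hgC : ∀ z, ‖g z‖ ≤ C) :
    μ[fun ϖ => g (X ϖ, W ϖ) | m] =ᵐ[μ] fun ϖ => ∫ w, g (X ϖ, w) ∂(μ.map W) := by
  have hG : StronglyMeasurable fun x => ∫ w, g (x, w) ∂(μ.map W) :=
    hg.stronglyMeasurable.integral_prod_right'
  have := Measure.isProbabilityMeasure_map (μ := μ) hW.aemeasurable
  have hGC : ∀ x, ‖∫ w, g (x, w) ∂(μ.map W)‖ ≤ C := fun x => by
    simpa using norm_integral_le_of_norm_le_const (μ := μ.map W) (.of_forall fun w => hgC (x, w))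
  have hX' : Measurable X := hX.mono hm le_rfl
  have hint : Integrable (fun ϖ => g (X ϖ, W ϖ)) μ :=
    .of_bound (hg.comp (hX'.prodMk hW)).aestronglyMeasurable C (.of_forall fun _ => hgC _)
  refine (ae_eq_condExp_of_forall_setIntegral_eq hm hint (fun s _ _ => ?_) (fun s hs _ => ?_)
    (hG.comp_measurable hX).aestronglyMeasurable).symm
  · exact (Integrable.of_bound (hG.comp_measurable hX').aestronglyMeasurable C
      (.of_forall fun _ => hGC _)).integrableOn
  -- `(X, · ∈ s)` is still `m`-measurable, hence independent of `W`
  let g' : (α × Prop) × β → ℝ := fun z => if z.1.2 then g (z.1.1, z.2) else 0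
  have hZ : Measurable[m] fun ϖ => (X ϖ, ϖ ∈ s) := hX.prodMk (@measurable_mem Ω s m |>.2 hs)
  have hg' : Measurable g' :=
    Measurable.ite (measurableSet_setOfPred.2 (measurable_snd.comp measurable_fst))
      (hg.comp ((measurable_fst.comp measurable_fst).prodMk measurable_snd)) measurable_const
  have hg'C : ∀ z, ‖g' z‖ ≤ C := fun z => by
    unfold g'
    split_ifs
    exacts [hgC _, by simpa using (norm_nonneg _).trans (hgC (z.1.1, z.2))]
  calc ∫ ϖ in s, ∫ w, g (X ϖ, w) ∂(μ.map W) ∂μ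
      = ∫ ϖ, ∫ w, g' ((X ϖ, ϖ ∈ s), w) ∂(μ.map W) ∂μ := by
        rw [← integral_indicator (hm s hs)]
        refine integral_congr_ae (.of_forall fun ϖ => ?_)
        by_cases h : ϖ ∈ s <;> simp [g', h]
    _ = ∫ ϖ, s.indicator (fun ϖ => g (X ϖ, W ϖ)) ϖ ∂μ :=
        (integral_comp_prod_eq_integral_integral_of_indepFun (hZ.mono hm le_rfl) hW
          (indep_of_indep_of_le_left hind hZ.comap_le) hg' hg'C).symm
    _ = ∫ ϖ in s, g (X ϖ, W ϖ) ∂μ := integral_indicator (hm s hs)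

end Freezing

theorem condExp_le_of_le_piecewise {Ω : Type*} {m mΩ : MeasurableSpace Ω} {μ : Measure Ω}
    (hm : m ≤ mΩ) [SigmaFinite (μ.trim hm)] {f g h : Ω → ℝ} {s : Set Ω}
    (hs : MeasurableSet[m] s) (hg : StronglyMeasurable[m] g)
    (hf_int : Integrable f μ) (hg_int : Integrable g μ) (hh_int : Integrable h μ)
    (hfle : f ≤ᵐ[μ] s.piecewise h g) (hhle : ∀ᵐ ϖ ∂μ, ϖ ∈ s → μ[h|m] ϖ ≤ g ϖ) :
    μ[f|m] ≤ᵐ[μ] g := by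
  rw [← Set.indicator_add_compl_eq_piecewise] at hfle
  have hcond : μ[s.indicator h + sᶜ.indicator g|m] =ᵐ[μ] s.indicator (μ[h|m]) + sᶜ.indicator g :=
    (condExp_add (hh_int.indicator (hm s hs)) (hg_int.indicator (hm s hs).compl) m).trans
      ((condExp_indicator hh_int hs).add (by
        rw [condExp_of_stronglyMeasurable hm (hg.indicator hs.compl)
          (hg_int.indicator (hm s hs).compl)]))
  filter_upwards [condExp_mono hf_int ((hh_int.indicator (hm s hs)).add
    (hg_int.indicator (hm s hs).compl)) hfle, hcond, hhle] with ϖ hle heq hhϖ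
  refine hle.trans (heq.trans_le ?_)
  by_cases hϖ : ϖ ∈ s <;> simp [hϖ, hhϖ]

section NoiseDriven

variable {Ω α β : Type*} {mΩ : MeasurableSpace Ω} {μ : Measure Ω} {ω : ℕ → Ω → β}
  {x : ℕ → Ω → α} {F : α → β → α} {a : α}

theorem ae_forall_mem_of_mapsTo {S : Set α} {D : Set β} (hF : ∀ y ∈ S, ∀ w ∈ D, F y w ∈ S)
    (ha : a ∈ S) (hx0 : ∀ ϖ, x 0 ϖ = a) (hx : ∀ t ϖ, x (t + 1) ϖ = F (x t ϖ) (ω t ϖ))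
    (hD : ∀ t, ∀ᵐ ϖ ∂μ, ω t ϖ ∈ D) : ∀ᵐ ϖ ∂μ, ∀ t, x t ϖ ∈ S := by
  filter_upwards [ae_all_iff.2 hD] with ϖ hϖ t
  induction t with
  | zero => rwa [hx0]
  | succ t ih => rw [hx]; exact hF _ ih _ (hϖ t)

variable [mα : MeasurableSpace α] [mβ : MeasurableSpace β]

theorem measurable_iSup_comap_noise_of_le (hF : Measurable (Function.uncurry F))
    (hx0 : ∀ ϖ, x 0 ϖ = a) (hx : ∀ t ϖ, x (t + 1) ϖ = F (x t ϖ) (ω t ϖ)) {i t : ℕ} (hi : i ≤ t) :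
    Measurable[⨆ j ∈ Set.Iio t, mβ.comap (ω j)] (x i) := by
  induction i with
  | zero => simp [funext hx0]
  | succ i ih =>
    rw [show x (i + 1) = fun ϖ => F (x i ϖ) (ω i ϖ) from funext (hx i)]
    exact hF.comp ((ih (Nat.le_of_succ_le hi)).prodMk
      (Measurable.of_comap_le (le_biSup (fun j => mβ.comap (ω j)) (Set.mem_Iio.2 hi))))

theorem indep_iSup_comap_comap_noise (hω : ∀ t, Measurable (ω t)) (hind : iIndepFun ω μ)
    (hF : Measurable (Function.uncurry F)) (hx0 : ∀ ϖ, x 0 ϖ = a)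
    (hx : ∀ t ϖ, x (t + 1) ϖ = F (x t ϖ) (ω t ϖ)) (t : ℕ) :
    Indep (⨆ i ∈ Set.Iic t, mα.comap (x i)) (mβ.comap (ω t)) μ := by
  have := indep_iSup_of_disjoint (fun j => (hω j).comap_le) hind
    (Set.disjoint_singleton_right.2 (lt_irrefl t) : Disjoint (Set.Iio t) {t})
  rw [iSup_singleton] at this
  exact indep_of_indep_of_le_left this
    (iSup₂_le fun i hi => (measurable_iSup_comap_noise_of_le hF hx0 hx hi).comap_le)

theorem condExp_comp_succ_ae_eq_integral [IsProbabilityMeasure μ] {d : Measure β}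
    (hω : ∀ t, Measurable (ω t)) (hind : iIndepFun ω μ) (hlaw : ∀ t, μ.map (ω t) = d)
    (hF : Measurable (Function.uncurry F)) (hx0 : ∀ ϖ, x 0 ϖ = a)
    (hx : ∀ t ϖ, x (t + 1) ϖ = F (x t ϖ) (ω t ϖ)) {g : α → ℝ} {C : ℝ} (hg : Measurable g)
    (hgC : ∀ y, ‖g y‖ ≤ C) (t : ℕ) :
    μ[fun ϖ => g (x (t + 1) ϖ)|⨆ i ∈ Set.Iic t, mα.comap (x i)] =ᵐ[μ]
      fun ϖ => ∫ w, g (F (x t ϖ) w) ∂d := by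
  have hle : (⨆ i ∈ Set.Iic t, mα.comap (x i)) ≤ mΩ := iSup₂_le fun i _ =>
    ((measurable_iSup_comap_noise_of_le hF hx0 hx le_rfl).mono
      (iSup₂_le fun j _ => (hω j).comap_le) le_rfl).comap_le
  simpa only [hx, hlaw t, Function.comp_apply, Function.uncurry_apply_pair] using
    condExp_comp_prod_ae_eq_integral_of_indep hle
      (Measurable.of_comap_le (le_biSup (fun i => mα.comap (x i)) (Set.mem_Iic.2 le_rfl))) (hω t)
      (indep_iSup_comap_comap_noise hω hind hF hx0 hx t) (hg.comp hF) fun _ => hgC _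

end NoiseDriven

theorem norm_max_zero_min_le {c : ℝ} (hc : 0 ≤ c) (v : ℝ) : ‖max 0 (min v c)‖ ≤ c := by
  rw [Real.norm_eq_abs, abs_of_nonneg (le_max_left _ _)]
  exact max_le hc (min_le_right _ _)

theorem integral_max_zero_min_le {β : Type*} [MeasurableSpace β] {d : Measure β} {h : β → ℝ}
    (hh : Integrable h d) (h0 : 0 ≤ᵐ[d] h) (c : ℝ) :
    ∫ w, max 0 (min (h w) c) ∂d ≤ ∫ w, h w ∂d := by
  have hle : ∀ᵐ w ∂d, max 0 (min (h w) c) ≤ h w :=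
    h0.mono fun w hw => max_le hw (min_le_left _ _)
  refine integral_mono_ae (hh.mono ?_ ?_) hh hle
  · exact (continuous_const.max (continuous_id.min continuous_const)).comp_aestronglyMeasurable hh.1
  · filter_upwards [h0, hle] with w hw hwle
    rwa [Real.norm_eq_abs, Real.norm_eq_abs, abs_of_nonneg (le_max_left _ _), abs_of_nonneg hw]

theorem integral_max_zero_min_comp_le {α β : Type*} [TopologicalSpace α] [MeasurableSpace α]
    [OpensMeasurableSpace α] [MeasurableSpace β] {d : Measure β} [IsFiniteMeasure d]
    {K : Set α} (hK : IsCompact K) {V : α → ℝ} (hV : Continuous V) (hV0 : ∀ y ∈ K, 0 ≤ V y)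
    {G : β → α} (hG : Measurable G) (hGK : ∀ᵐ w ∂d, G w ∈ K) (c : ℝ) :
    ∫ w, max 0 (min (V (G w)) c) ∂d ≤ ∫ w, V (G w) ∂d := by
  obtain ⟨B, hB⟩ := hK.exists_bound_of_continuousOn hV.continuousOn
  exact integral_max_zero_min_le
    (.of_bound (hV.measurable.comp hG).aestronglyMeasurable B (hGK.mono fun w hw => hB _ hw))
    (hGK.mono fun w hw => hV0 _ hw) c

section ReachAvoid

variable {α : Type*} (Xt : Set α) (V : α → ℝ) (c : ℝ)

noncomputable def reachAvoidProcess (x : ℕ → α) (t : ℕ) : ℝ :=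
  if ∀ i ≤ t, x i ∉ Xt ∧ V (x i) < c then V (x t)
  else if ∃ i ≤ t, x i ∈ Xt ∧ ∀ j ≤ i, V (x j) < c then 0
  else c

variable {Xt V c} {x : ℕ → α} {t : ℕ}

theorem reachAvoidProcess_nonneg (hV : 0 ≤ V (x t)) (hc : 0 ≤ c) :
    0 ≤ reachAvoidProcess Xt V c x t := by
  unfold reachAvoidProcess
  split_ifs
  exacts [hV, le_rfl, hc]

theorem reachAvoidProcess_le (hc : 0 ≤ c) : reachAvoidProcess Xt V c x t ≤ c := by
  unfold reachAvoidProcess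
  split_ifs with h
  exacts [(h t le_rfl).2.le, hc, le_rfl]

theorem reachAvoidProcess_succ_of_not_forall (h : ¬ ∀ i ≤ t, x i ∉ Xt ∧ V (x i) < c) :
    reachAvoidProcess Xt V c x (t + 1) = reachAvoidProcess Xt V c x t := by
  have hreach : (∃ i ≤ t + 1, x i ∈ Xt ∧ ∀ j ≤ i, V (x j) < c) ↔
      ∃ i ≤ t, x i ∈ Xt ∧ ∀ j ≤ i, V (x j) < c := by
    refine ⟨fun ⟨i, hi, hQ⟩ => ?_, fun ⟨i, hi, hQ⟩ => ⟨i, hi.trans t.le_succ, hQ⟩⟩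
    rcases hi.lt_or_eq with hi | rfl
    · exact ⟨i, Nat.le_of_lt_succ hi, hQ⟩
    · push Not at h
      obtain ⟨k, hk, hkV⟩ := h
      have hkV' := hQ.2 k (hk.trans t.le_succ)
      exact ⟨k, hk, not_not.1 fun hkXt => (hkV hkXt).not_gt hkV', fun j hj => hQ.2 j
        (hj.trans (hk.trans t.le_succ))⟩
  unfold reachAvoidProcess
  rw [if_neg h, if_neg fun h' => h fun i hi => h' i (hi.trans t.le_succ), if_congr hreach rfl rfl]

theorem reachAvoidProcess_succ_le_of_forall (h : ∀ i ≤ t, x i ∉ Xt ∧ V (x i) < c)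
    (hV : 0 ≤ V (x (t + 1))) :
    reachAvoidProcess Xt V c x (t + 1) ≤ min (V (x (t + 1))) c := by
  have hrun : ∀ i ≤ t + 1, i ≠ t + 1 → x i ∉ Xt ∧ V (x i) < c := fun i hi hne =>
    h i (Nat.le_of_lt_succ (hi.lt_of_ne hne))
  unfold reachAvoidProcess
  split_ifs with hrun' hreach
  · exact le_min le_rfl (hrun' _ le_rfl).2.le
  · obtain ⟨i, hi, hiXt, hiV⟩ := hreach
    obtain rfl : i = t + 1 := not_not.1 fun hne => (hrun i hi hne).1 hiXt
    exact le_min hV (hV.trans (hiV _ le_rfl).le)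
  · refine le_min (not_lt.1 fun hlt => hreach ⟨t + 1, le_rfl, ?_, fun j hj => ?_⟩) le_rfl
    · exact not_not.1 fun hnot => hrun' fun j hj =>
        if hne : j = t + 1 then hne ▸ ⟨hnot, hlt⟩ else hrun j hj hne
    · exact if hne : j = t + 1 then hne ▸ hlt else (hrun j hj hne).2

theorem measurableSet_forall_le_notMem_and_lt {Ω : Type*} {m : MeasurableSpace Ω}
    [MeasurableSpace α] (hXt : MeasurableSet Xt) (hV : Measurable V) {x : ℕ → Ω → α}
    (hx : ∀ i ≤ t, Measurable[m] (x i)) :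
    MeasurableSet[m] {ϖ | ∀ i ≤ t, x i ϖ ∉ Xt ∧ V (x i ϖ) < c} :=
  measurableSet_setOfPred.2 <| Measurable.forall_le fun i hi =>
    (hXt.mem.comp (hx i hi)).not.and
      (measurableSet_setOfPred.1 (measurableSet_lt (hV.comp (hx i hi)) measurable_const))

theorem Measurable.reachAvoidProcess {Ω : Type*} {m : MeasurableSpace Ω} [MeasurableSpace α]
    (hXt : MeasurableSet Xt) (hV : Measurable V) {x : ℕ → Ω → α}
    (hx : ∀ i ≤ t, Measurable[m] (x i)) :
    Measurable[m] fun ϖ => reachAvoidProcess Xt V c (x · ϖ) t := by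
  have hlt : ∀ i ≤ t, Measurable[m] fun ϖ => V (x i ϖ) < c := fun i hi =>
    measurableSet_setOfPred.1 (measurableSet_lt (hV.comp (hx i hi)) measurable_const)
  refine Measurable.ite (measurableSet_forall_le_notMem_and_lt hXt hV hx) (hV.comp (hx t le_rfl))
    (Measurable.ite (measurableSet_setOfPred.2 (Measurable.exists_le fun i hi => ?_))
      measurable_const measurable_const)
  exact (hXt.mem.comp (hx i hi)).and (Measurable.forall_le fun j hj => hlt j (hj.trans hi))

theorem integrable_reachAvoidProcess {Ω : Type*} {mΩ : MeasurableSpace Ω} [MeasurableSpace α]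
    {μ : Measure Ω} [IsFiniteMeasure μ] (hXt : MeasurableSet Xt) (hV : Measurable V)
    (hc : 0 ≤ c) {x : ℕ → Ω → α} (hx : ∀ i ≤ t, Measurable (x i))
    (hV0 : ∀ᵐ ϖ ∂μ, 0 ≤ V (x t ϖ)) :
    Integrable (fun ϖ => reachAvoidProcess Xt V c (x · ϖ) t) μ :=
  .of_bound (Measurable.reachAvoidProcess hXt hV hx).aestronglyMeasurable c
    (hV0.mono fun _ h => by
      rw [Real.norm_eq_abs, abs_of_nonneg (reachAvoidProcess_nonneg h hc)]
      exact reachAvoidProcess_le hc)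

theorem condExp_reachAvoidProcess_succ_le {Ω : Type*} {m mΩ : MeasurableSpace Ω}
    [MeasurableSpace α] {μ : Measure Ω} [IsFiniteMeasure μ] (hm : m ≤ mΩ)
    [SigmaFinite (μ.trim hm)] (hXt : MeasurableSet Xt) (hV : Measurable V) (hc : 0 ≤ c)
    {x : ℕ → Ω → α} (hx : ∀ i ≤ t, Measurable[m] (x i)) (hx_succ : Measurable (x (t + 1)))
    (hV0 : ∀ᵐ ϖ ∂μ, ∀ i, 0 ≤ V (x i ϖ))
    (hdrift : ∀ᵐ ϖ ∂μ, x t ϖ ∉ Xt → V (x t ϖ) < c →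
      μ[fun ϖ => max 0 (min (V (x (t + 1) ϖ)) c)|m] ϖ ≤ V (x t ϖ)) :
    μ[fun ϖ => reachAvoidProcess Xt V c (x · ϖ) (t + 1)|m] ≤ᵐ[μ]
      fun ϖ => reachAvoidProcess Xt V c (x · ϖ) t := by
  have hx' : ∀ i ≤ t, Measurable (x i) := fun i hi => (hx i hi).mono hm le_rfl
  have hT : Integrable (fun ϖ => max 0 (min (V (x (t + 1) ϖ)) c)) μ :=
    .of_bound (measurable_const.max ((hV.comp hx_succ).min measurable_const)).aestronglyMeasurable
      c (.of_forall fun _ => norm_max_zero_min_le hc _)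
  refine condExp_le_of_le_piecewise hm (measurableSet_forall_le_notMem_and_lt (c := c) hXt hV hx)
    (Measurable.reachAvoidProcess hXt hV hx).stronglyMeasurable
    (integrable_reachAvoidProcess hXt hV hc
      (fun i hi => (Nat.le_succ_iff.1 hi).elim (hx' i) fun h => h ▸ hx_succ)
      (hV0.mono fun _ h => h _))
    (integrable_reachAvoidProcess hXt hV hc hx' (hV0.mono fun _ h => h _)) hT ?_ ?_
  · filter_upwards [hV0] with ϖ hϖ
    by_cases hrun : ∀ i ≤ t, x i ϖ ∉ Xt ∧ V (x i ϖ) < c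
    · simp only [Set.piecewise, Set.mem_ofPred_eq, if_pos hrun]
      exact (reachAvoidProcess_succ_le_of_forall hrun (hϖ _)).trans (le_max_right _ _)
    · simp only [Set.piecewise, Set.mem_ofPred_eq, if_neg hrun]
      exact (reachAvoidProcess_succ_of_not_forall hrun).le
  · filter_upwards [hdrift] with ϖ hϖ hrun
    rw [reachAvoidProcess, if_pos hrun]
    exact hϖ (hrun t le_rfl).1 (hrun t le_rfl).2

end ReachAvoid

theorem rasm_induces_nonneg_supermartingale_general
    {m n q : ℕ}
    (𝒳 : Set (Fin m → ℝ)) (hXcpt : IsCompact 𝒳)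
    (f : (Fin m → ℝ) → (Fin n → ℝ) → (Fin q → ℝ) → (Fin m → ℝ))
    (hf : Measurable fun xuw : (Fin m → ℝ) × (Fin n → ℝ) × (Fin q → ℝ) =>
      f xuw.1 xuw.2.1 xuw.2.2)
    (π : (Fin m → ℝ) → (Fin n → ℝ)) (hπ : Measurable π)
    (d : Measure (Fin q → ℝ)) [IsProbabilityMeasure d]
    (hinv : ∀ x ∈ 𝒳, ∀ w ∈ measureSupport d, f x (π x) w ∈ 𝒳)
    (X0 Xt : Set (Fin m → ℝ))
    (hX0sub : X0 ⊆ 𝒳)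
    (hXtmeas : MeasurableSet Xt)
    (p : ℝ) (hp1 : p < 1)
    (c : ℝ) (hc : c = 1 / (1 - p))
    {Ω : Type*} {m0 : MeasurableSpace Ω} (μ : Measure Ω) [IsProbabilityMeasure μ]
    (ω : ℕ → Ω → (Fin q → ℝ))
    (hωmeas : ∀ t, Measurable (ω t))
    (hωindep : iIndepFun ω μ)
    (hωlaw : ∀ t, μ.map (ω t) = d)
    (x₀ : Fin m → ℝ) (hx₀ : x₀ ∈ X0)
    (traj : ℕ → Ω → (Fin m → ℝ))
    (htraj0 : ∀ ϖ, traj 0 ϖ = x₀)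
    (htraj : ∀ t ϖ, traj (t + 1) ϖ = f (traj t ϖ) (π (traj t ϖ)) (ω t ϖ))
    (V : (Fin m → ℝ) → ℝ) (hVcont : Continuous V)
    (hVnonneg : ∀ x ∈ 𝒳, 0 ≤ V x)
    (hVdec : ∃ ε > 0, ∀ x ∈ 𝒳 \ Xt, V x ≤ c →
      ∫ w, V (f x (π x) w) ∂d ≤ V x - ε)
    (ℱ : Filtration ℕ m0)
    (hℱ : ∀ t, ℱ t = ⨆ i ∈ Set.Iic t,
      MeasurableSpace.comap (traj i) (inferInstance : MeasurableSpace (Fin m → ℝ)))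
    (Y : ℕ → Ω → ℝ)
    (hY : ∀ t ϖ, Y t ϖ =
      if ∀ i ≤ t, traj i ϖ ∉ Xt ∧ V (traj i ϖ) < c then V (traj t ϖ)
      else if ∃ i ≤ t, traj i ϖ ∈ Xt ∧ ∀ j ≤ i, V (traj j ϖ) < c then 0
      else c) :
    (∀ t, StronglyMeasurable[ℱ t] (Y t)) ∧ (∀ t, Integrable (Y t) μ)
      ∧ (∀ t, 0 ≤ᵐ[μ] Y t) ∧ (∀ t, μ[Y (t + 1)|ℱ t] ≤ᵐ[μ] Y t) := by
  obtain ⟨ε, hε, hdec⟩ := hVdec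
  obtain rfl : Y = fun t ϖ => reachAvoidProcess Xt V c (traj · ϖ) t := funext₂ hY
  have hc0 : 0 ≤ c := hc ▸ one_div_nonneg.2 (sub_nonneg.2 hp1.le)
  have hF : Measurable (Function.uncurry fun y w => f y (π y) w) :=
    hf.comp (measurable_fst.prodMk ((hπ.comp measurable_fst).prodMk measurable_snd))
  have hx𝒳 : ∀ᵐ ϖ ∂μ, ∀ t, traj t ϖ ∈ 𝒳 :=
    ae_forall_mem_of_mapsTo hinv (hX0sub hx₀) htraj0 htraj fun t =>
      ae_of_ae_map (hωmeas t).aemeasurable (hωlaw t ▸ ae_mem_measureSupport d)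
  have hV0 : ∀ᵐ ϖ ∂μ, ∀ t, 0 ≤ V (traj t ϖ) := hx𝒳.mono fun ϖ h t => hVnonneg _ (h t)
  have hxℱ : ∀ t, ∀ i ≤ t, Measurable[ℱ t] (traj i) := fun t i hi =>
    Measurable.of_comap_le (hℱ t ▸ le_biSup (fun i => MeasurableSpace.comap (traj i) _) hi)
  have hxm : ∀ t, Measurable (traj t) := fun t => (hxℱ t t le_rfl).mono (ℱ.le t) le_rfl
  refine ⟨fun t =>
      (Measurable.reachAvoidProcess hXtmeas hVcont.measurable (hxℱ t)).stronglyMeasurable,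
    fun t => integrable_reachAvoidProcess hXtmeas hVcont.measurable hc0 (fun i _ => hxm i)
      (hV0.mono fun _ h => h t),
    fun t => hV0.mono fun ϖ h => reachAvoidProcess_nonneg (h t) hc0, fun t => ?_⟩
  refine condExp_reachAvoidProcess_succ_le (ℱ.le t) hXtmeas hVcont.measurable hc0 (hxℱ t)
    (hxm _) hV0 ?_
  have hmarkov := condExp_comp_succ_ae_eq_integral hωmeas hωindep hωlaw hF htraj0 htraj
    (g := fun y => max 0 (min (V y) c))
    (measurable_const.max (hVcont.measurable.min measurable_const))
    (fun _ => norm_max_zero_min_le hc0 _) t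
  rw [← hℱ t] at hmarkov
  filter_upwards [hmarkov, hx𝒳] with ϖ hcond hϖ hXt hlt
  rw [hcond]
  refine (integral_max_zero_min_comp_le hXcpt hVcont hVnonneg
    (G := fun w => f (traj t ϖ) (π (traj t ϖ)) w) (hF.comp measurable_prodMk_left)
    ((ae_mem_measureSupport d).mono fun w hw => hinv _ (hϖ t) w hw) c).trans ?_
  linarith [hdec _ ⟨hϖ t, hXt⟩ hlt.le]

/-- The process `(Y t)` obtained from an RASM `V` along the trajectory process — equal to
`V (x_t)` until either the target set is reached (after which it is `0`) or the level
`c = 1/(1-p)` is exceeded by `V` (after which it is `c`) — is a nonnegative supermartingale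
with respect to the filtration generated by the trajectory: each `Y t` is `ℱ t`-measurable,
integrable, nonnegative, and `𝔼[Y (t+1) ∣ ℱ t] ≤ Y t` almost surely. -/
theorem rasm_induces_nonneg_supermartingale
    {m n q : ℕ}
    (𝒳 : Set (Fin m → ℝ)) (hXcpt : IsCompact 𝒳) (hXmeas : MeasurableSet 𝒳)
    (f : (Fin m → ℝ) → (Fin n → ℝ) → (Fin q → ℝ) → (Fin m → ℝ))
    (hf : Measurable fun xuw : (Fin m → ℝ) × (Fin n → ℝ) × (Fin q → ℝ) =>
      f xuw.1 xuw.2.1 xuw.2.2)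
    (π : (Fin m → ℝ) → (Fin n → ℝ)) (hπ : Measurable π)
    (d : Measure (Fin q → ℝ)) [IsProbabilityMeasure d]
    (hinv : ∀ x ∈ 𝒳, ∀ w ∈ measureSupport d, f x (π x) w ∈ 𝒳)
    (X0 Xt Xu : Set (Fin m → ℝ))
    (hX0sub : X0 ⊆ 𝒳) (hXtsub : Xt ⊆ 𝒳) (hXusub : Xu ⊆ 𝒳)
    (hX0meas : MeasurableSet X0) (hXtmeas : MeasurableSet Xt) (hXumeas : MeasurableSet Xu)
    (hdisj : Disjoint Xt Xu)
    (p : ℝ) (hp0 : 0 ≤ p) (hp1 : p < 1)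
    (c : ℝ) (hc : c = 1 / (1 - p))
    {Ω : Type*} {m0 : MeasurableSpace Ω} (μ : Measure Ω) [IsProbabilityMeasure μ]
    (ω : ℕ → Ω → (Fin q → ℝ))
    (hωmeas : ∀ t, Measurable (ω t))
    (hωindep : iIndepFun ω μ)
    (hωlaw : ∀ t, μ.map (ω t) = d)
    (x₀ : Fin m → ℝ) (hx₀ : x₀ ∈ X0)
    (traj : ℕ → Ω → (Fin m → ℝ))
    (htraj0 : ∀ ϖ, traj 0 ϖ = x₀)
    (htraj : ∀ t ϖ, traj (t + 1) ϖ = f (traj t ϖ) (π (traj t ϖ)) (ω t ϖ))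
    (V : (Fin m → ℝ) → ℝ) (hVcont : Continuous V)
    (hVnonneg : ∀ x ∈ 𝒳, 0 ≤ V x)
    (hVinit : ∀ x ∈ X0, V x ≤ 1)
    (hVunsafe : ∀ x ∈ Xu, c ≤ V x)
    (hVdec : ∃ ε > 0, ∀ x ∈ 𝒳 \ Xt, V x ≤ c →
      ∫ w, V (f x (π x) w) ∂d ≤ V x - ε)
    (ℱ : Filtration ℕ m0)
    (hℱ : ∀ t, ℱ t = ⨆ i ∈ Set.Iic t,
      MeasurableSpace.comap (traj i) (inferInstance : MeasurableSpace (Fin m → ℝ)))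
    (Y : ℕ → Ω → ℝ)
    (hY : ∀ t ϖ, Y t ϖ =
      if ∀ i ≤ t, traj i ϖ ∉ Xt ∧ V (traj i ϖ) < c then V (traj t ϖ)
      else if ∃ i ≤ t, traj i ϖ ∈ Xt ∧ ∀ j ≤ i, V (traj j ϖ) < c then 0
      else c) :
    (∀ t, StronglyMeasurable[ℱ t] (Y t)) ∧ (∀ t, Integrable (Y t) μ)
      ∧ (∀ t, 0 ≤ᵐ[μ] Y t) ∧ (∀ t, μ[Y (t + 1)|ℱ t] ≤ᵐ[μ] Y t) :=
  rasm_induces_nonneg_supermartingale_general 𝒳 hXcpt f hf π hπ d hinv X0 Xt hX0sub hXtmeas p hp1 c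
    hc μ ω hωmeas hωindep hωlaw x₀ hx₀ traj htraj0 htraj V hVcont hVnonneg hVdec ℱ hℱ Y hY
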